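/- Let N ≥ 2 and A = A(1, N). Assume X, Y belong to Λ and the pair (supp(X), supp(Y)) is crossing, and let f: X → Y be a nonzero morphism in K^b(A-proj). Then there exist complexes X′, Y′ belonging to Λ, an inclusion inc: Y′ → Y, a projection pr: X → X′, and a crossing morphism f′: X′ → Y′ such that f = inc ∘ f′ ∘ pr in K^b(A-proj). -/

import Mathlib

open CategoryTheory Limits


section CyclicAlgebra

variable {N r : ℕ} [NeZero N] {A : Type*} [Ring A]

/-- The generators-and-relations data for the algebra `A(r, N)` given by the cyclic
quiver with `N` vertices `0, 1, …, N−1`, arrows `α_i : i → i+1` (indices modulo `N`),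
and the `r` relations `α_0α_{N−1}, α_1α_0, …, α_{r−1}α_{r−2}` (composed right to left). -/
structure CyclicNakayamaData (N r : ℕ) (A : Type*) [Ring A] [NeZero N] where
  e : ZMod N → A
  α : ZMod N → A
  idem : ∀ i j : ZMod N, e i * e j = if i = j then e i else 0
  sum_e : ∑ i : ZMod N, e i = 1
  alpha_e : ∀ i : ZMod N, α i * e i = α i
  e_alpha : ∀ i : ZMod N, e (i + 1) * α i = α i
  rel : ∀ j : ℕ, j < r → α (j : ZMod N) * α ((j : ZMod N) - 1) = 0

namespace CyclicNakayamaData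

/-- The product in `A` of the path of length `ℓ` starting at vertex `i`:
`α_{i+ℓ−1} ⋯ α_{i+1} α_i` (and `e i` for `ℓ = 0`). -/
def path (D : CyclicNakayamaData N r A) (i : ZMod N) : ℕ → A
  | 0 => D.e i
  | (ℓ + 1) => D.α (i + (ℓ : ZMod N)) * D.path i ℓ

variable (D : CyclicNakayamaData N r A)

@[simp] lemma path_zero (i : ZMod N) : D.path i 0 = D.e i := rfl

lemma path_succ (i : ZMod N) (ℓ : ℕ) :
    D.path i (ℓ + 1) = D.α (i + (ℓ : ZMod N)) * D.path i ℓ := rfl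

lemma path_one (i : ZMod N) : D.path i 1 = D.α i := by
  rw [path_succ, path_zero, Nat.cast_zero, add_zero, D.alpha_e]

lemma path_mul_e (i : ZMod N) (ℓ : ℕ) : D.path i ℓ * D.e i = D.path i ℓ := by
  induction ℓ with
  | zero => simpa using D.idem i i
  | succ ℓ ih => rw [path_succ, mul_assoc, ih]

lemma e_mul_path (i : ZMod N) (ℓ : ℕ) : D.e (i + (ℓ : ZMod N)) * D.path i ℓ = D.path i ℓ := by
  induction ℓ with
  | zero => simpa using D.idem i i
  | succ ℓ ih =>
      rw [path_succ, ← mul_assoc]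
      have h : i + ((ℓ + 1 : ℕ) : ZMod N) = (i + (ℓ : ZMod N)) + 1 := by push_cast; ring
      rw [h, D.e_alpha]

lemma path_split (i : ZMod N) (a b : ℕ) :
    D.path i (a + b) = D.path (i + (a : ZMod N)) b * D.path i a := by
  induction b with
  | zero => simpa using (D.e_mul_path i a).symm
  | succ b ih =>
      have h1 : a + (b + 1) = (a + b) + 1 := by ring
      rw [h1, path_succ, ih, path_succ, ← mul_assoc]
      congr 2
      push_cast
      ring

/-- The key vanishing: a path passing a relation junction is zero. If `a, b ≥ 1` and the
vertex `i + a` equals some `j` with `j < r`, then `path (i+a) b * path i a = 0`. -/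
lemma path_mul_path_eq_zero (i : ZMod N) (a b : ℕ) (ha : 1 ≤ a) (hb : 1 ≤ b)
    (hj : ∃ j : ℕ, j < r ∧ i + (a : ZMod N) = (j : ZMod N)) :
    D.path (i + (a : ZMod N)) b * D.path i a = 0 := by
  obtain ⟨j, hjr, hji⟩ := hj
  obtain ⟨a', rfl⟩ : ∃ a', a = a' + 1 := ⟨a - 1, by omega⟩
  obtain ⟨b', rfl⟩ : ∃ b', b = b' + 1 := ⟨b - 1, by omega⟩
  have h1 : D.path (i + ((a' + 1 : ℕ) : ZMod N)) (b' + 1) =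
      D.path ((i + ((a' + 1 : ℕ) : ZMod N)) + ((1 : ℕ) : ZMod N)) b' *
        D.α (i + ((a' + 1 : ℕ) : ZMod N)) := by
    have h := D.path_split (i + ((a' + 1 : ℕ) : ZMod N)) 1 b'
    rw [D.path_one] at h
    rw [Nat.add_comm 1 b'] at h
    exact h
  have h2 : D.path i (a' + 1) = D.α (i + (a' : ZMod N)) * D.path i a' := D.path_succ i a'
  have hαα : D.α (i + ((a' + 1 : ℕ) : ZMod N)) * D.α (i + (a' : ZMod N)) = 0 := by
    have h3 : i + (a' : ZMod N) = (j : ZMod N) - 1 := by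
      rw [← hji, Nat.cast_add, Nat.cast_one]; ring
    rw [hji, h3]
    exact D.rel j hjr
  rw [h1, h2, mul_assoc, ← mul_assoc (D.α (i + ((a' + 1 : ℕ) : ZMod N))), hαα, zero_mul,
    mul_zero]

end CyclicNakayamaData

end CyclicAlgebra


namespace PaperCZ

variable {A : Type*} [Ring A]

/-- The left ideal `{x | x ε = x}`; for an idempotent `ε = e_i` this is the
indecomposable projective module `A e_i`. -/
def emod (A : Type*) [Ring A] (ε : A) : Submodule A A where
  carrier := {x | x * ε = x}
  add_mem' := by intro x y hx hy; simp only [Set.mem_setOf_eq] at *; rw [add_mul, hx, hy]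
  zero_mem' := by simp
  smul_mem' := by
    intro a x hx; simp only [Set.mem_setOf_eq, smul_eq_mul] at *; rw [mul_assoc, hx]

lemma mem_emod {ε x : A} (h : x * ε = x) : x ∈ emod A ε := h

/-- The projective module `A ε` as an object of `ModuleCat A`. -/
def PM (A : Type*) [Ring A] (ε : A) : ModuleCat A := ModuleCat.of A (emod A ε)

/-- Right multiplication `A ε → A ε′`, `x ↦ x p`, for `p` with `p ε′ = p`. -/
def rmul (ε : A) {ε' p : A} (hp : p * ε' = p) : PM A ε ⟶ PM A ε' :=
  ModuleCat.ofHom (X := emod A ε) (Y := emod A ε')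
    { toFun := fun x => ⟨x.1 * p, mem_emod (by rw [mul_assoc, hp])⟩
      map_add' := by intro x y; apply Subtype.ext; simp [add_mul]
      map_smul' := by intro a x; apply Subtype.ext; simp [mul_assoc] }

lemma rmul_apply (ε : A) {ε' p : A} (hp : p * ε' = p) (x : PM A ε) :
    (rmul ε hp x).1 = x.1 * p := rfl

/-- The "strand" complex determined by a family of idempotents `ε i` and connecting
elements `p i` with `p i * ε (i+1) = p i` and `p i * p (i+1) = 0`: the complex
`⋯ → A ε_i → A ε_{i+1} → ⋯` whose differentials are right multiplication by the `p i`. -/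
noncomputable def strand (ε p : ℤ → A) (hp : ∀ i, p i * ε (i + 1) = p i)
    (hsq : ∀ i, p i * p (i + 1) = 0) : CochainComplex (ModuleCat A) ℤ :=
  CochainComplex.of (fun i => PM A (ε i)) (fun i => rmul (ε i) (hp i))
    (fun i => by
      ext x
      apply Subtype.ext
      change (x.1 * p i) * p (i + 1) = _
      rw [mul_assoc, hsq i, mul_zero]
      rfl)


end PaperCZ

namespace PaperCZ

open CyclicNakayamaData

section RankOne

variable {N : ℕ} [NeZero N] {A : Type*} [Ring A]
variable (D : CyclicNakayamaData N 1 A)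

/-- `φ`: the multiplier of the unnamed arrow `P₀ → P₀`, i.e. the full cycle
`α_{N−1}⋯α₁α₀`. -/
def cyc : A := D.path 0 N

/-- the multiplier of the unnamed arrow `Q_a → P₀`, i.e. `α_{a−1}⋯α₁α₀`. -/
def toP (a : ℕ) : A := D.path 0 a

/-- the multiplier of the unnamed arrow `P₀ → Q_b`, i.e. `α_{N−1}⋯α_{b+1}α_b`. -/
def fromP (b : ℕ) : A := D.path (b : ZMod N) (N - b)

/-- the multiplier of the unnamed arrow `Q_a → Q_b` (`b < a`), i.e. `α_{a−1}⋯α_b`. -/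
def qq (a b : ℕ) : A := D.path (b : ZMod N) (a - b)

lemma one_le_N : 1 ≤ N := Nat.one_le_iff_ne_zero.mpr (NeZero.ne N)

lemma mul_path_zero (i : ZMod N) (a b : ℕ) (ha : 1 ≤ a) (hb : 1 ≤ b)
    (hia : i + (a : ZMod N) = 0) : D.path 0 b * D.path i a = 0 := by
  have h := D.path_mul_path_eq_zero i a b ha hb ⟨0, Nat.zero_lt_one, by rw [hia, Nat.cast_zero]⟩
  rwa [hia] at h

lemma cast_add_sub_self {b : ℕ} (hb : b ≤ N) :
    ((b : ZMod N) + ((N - b : ℕ) : ZMod N)) = 0 := by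
  rw [← Nat.cast_add, Nat.add_sub_cancel' hb, ZMod.natCast_self]

lemma cyc_mul_cyc : cyc D * cyc D = 0 :=
  mul_path_zero D 0 N N (one_le_N (N := N)) (one_le_N (N := N))
    (by rw [zero_add, ZMod.natCast_self])

lemma toP_mul_cyc {a : ℕ} (ha : 1 ≤ a) : toP D a * cyc D = 0 :=
  mul_path_zero D 0 N a (one_le_N (N := N)) ha (by rw [zero_add, ZMod.natCast_self])

lemma cyc_mul_fromP {b : ℕ} (hb : b < N) : cyc D * fromP D b = 0 :=
  mul_path_zero D (b : ZMod N) (N - b) N (by omega) (one_le_N (N := N))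
    (cast_add_sub_self (le_of_lt hb))

lemma toP_mul_fromP {a b : ℕ} (ha : 1 ≤ a) (hb : b < N) : toP D a * fromP D b = 0 :=
  mul_path_zero D (b : ZMod N) (N - b) a (by omega) ha (cast_add_sub_self (le_of_lt hb))

lemma cyc_mul_e : cyc D * D.e 0 = cyc D := D.path_mul_e 0 N
lemma toP_mul_e (a : ℕ) : toP D a * D.e 0 = toP D a := D.path_mul_e 0 a
lemma fromP_mul_e (b : ℕ) : fromP D b * D.e (b : ZMod N) = fromP D b := D.path_mul_e _ _
lemma qq_mul_e (a b : ℕ) : qq D a b * D.e (b : ZMod N) = qq D a b := D.path_mul_e _ _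

end RankOne


end PaperCZ


namespace PaperCZ

section Complexes

variable {N : ℕ} [NeZero N] {A : Type*} [Ring A]
variable (D : CyclicNakayamaData N 1 A)

/-- The complex `X_{m,n}`. -/
noncomputable def XC (m n : ℤ) : CochainComplex (ModuleCat A) ℤ :=
  strand (fun i => if m ≤ i ∧ i ≤ n then D.e 0 else 0)
    (fun i => if m ≤ i ∧ i < n then cyc D else 0)
    (by
      intro i
      try dsimp only
      by_cases h : m ≤ i ∧ i < n
      · rw [if_pos h, if_pos (show m ≤ i + 1 ∧ i + 1 ≤ n by omega)]
        exact cyc_mul_e D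
      · rw [if_neg h, zero_mul])
    (by
      intro i
      try dsimp only
      by_cases h : m ≤ i ∧ i < n
      · by_cases h' : m ≤ i + 1 ∧ i + 1 < n
        · rw [if_pos h, if_pos h']; exact cyc_mul_cyc D
        · rw [if_pos h, if_neg h', mul_zero]
      · rw [if_neg h, zero_mul])

/-- The complex `L_{m,n,a}`. -/
noncomputable def LC (m n : ℤ) (a : ℕ) (ha : 1 ≤ a) : CochainComplex (ModuleCat A) ℤ :=
  strand
    (fun i => if i = m then D.e (a : ZMod N) else if m < i ∧ i ≤ n then D.e 0 else 0)
    (fun i => if i = m ∧ m < n then toP D a else if m < i ∧ i < n then cyc D else 0)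
    (by
      intro i
      try dsimp only
      by_cases h1 : i = m ∧ m < n
      · rw [if_pos h1, if_neg (show ¬ (i + 1 = m) by omega),
          if_pos (show m < i + 1 ∧ i + 1 ≤ n by omega)]
        exact toP_mul_e D a
      · by_cases h2 : m < i ∧ i < n
        · rw [if_neg h1, if_pos h2, if_neg (show ¬ (i + 1 = m) by omega),
            if_pos (show m < i + 1 ∧ i + 1 ≤ n by omega)]
          exact cyc_mul_e D
        · rw [if_neg h1, if_neg h2, zero_mul])
    (by
      intro i
      try dsimp only
      by_cases h1 : i = m ∧ m < n
      · by_cases h2 : m < i + 1 ∧ i + 1 < n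
        · rw [if_pos h1, if_neg (show ¬ (i + 1 = m ∧ m < n) by omega), if_pos h2]
          exact toP_mul_cyc D ha
        · rw [if_pos h1, if_neg (show ¬ (i + 1 = m ∧ m < n) by omega), if_neg h2, mul_zero]
      · by_cases h2 : m < i ∧ i < n
        · by_cases h3 : m < i + 1 ∧ i + 1 < n
          · rw [if_neg h1, if_pos h2, if_neg (show ¬ (i + 1 = m ∧ m < n) by omega), if_pos h3]
            exact cyc_mul_cyc D
          · rw [if_neg h1, if_pos h2, if_neg (show ¬ (i + 1 = m ∧ m < n) by omega),
              if_neg h3, mul_zero]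
        · rw [if_neg h1, if_neg h2, zero_mul])

/-- The complex `R_{m,n,b}`. -/
noncomputable def RC (m n : ℤ) (b : ℕ) (hb : b < N) : CochainComplex (ModuleCat A) ℤ :=
  strand
    (fun i => if m ≤ i ∧ i < n then D.e 0 else if i = n then D.e (b : ZMod N) else 0)
    (fun i => if m ≤ i ∧ i + 1 < n then cyc D else
      if m ≤ i ∧ i + 1 = n then fromP D b else 0)
    (by
      intro i
      try dsimp only
      by_cases h1 : m ≤ i ∧ i + 1 < n
      · rw [if_pos h1, if_pos (show m ≤ i + 1 ∧ i + 1 < n by omega)]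
        exact cyc_mul_e D
      · by_cases h2 : m ≤ i ∧ i + 1 = n
        · rw [if_neg h1, if_pos h2, if_neg (show ¬ (m ≤ i + 1 ∧ i + 1 < n) by omega),
            if_pos (show i + 1 = n by omega)]
          exact fromP_mul_e D b
        · rw [if_neg h1, if_neg h2, zero_mul])
    (by
      intro i
      try dsimp only
      by_cases h1 : m ≤ i ∧ i + 1 < n
      · by_cases h2 : m ≤ i + 1 ∧ i + 1 + 1 < n
        · rw [if_pos h1, if_pos h2]; exact cyc_mul_cyc D
        · by_cases h3 : m ≤ i + 1 ∧ i + 1 + 1 = n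
          · rw [if_pos h1, if_neg h2, if_pos h3]; exact cyc_mul_fromP D hb
          · rw [if_pos h1, if_neg h2, if_neg h3, mul_zero]
      · by_cases h2 : m ≤ i ∧ i + 1 = n
        · rw [if_neg h1, if_pos h2, if_neg (show ¬ (m ≤ i + 1 ∧ i + 1 + 1 < n) by omega),
            if_neg (show ¬ (m ≤ i + 1 ∧ i + 1 + 1 = n) by omega), mul_zero]
        · rw [if_neg h1, if_neg h2, zero_mul])

/-- The complex `B_{m,n,a,b}`. -/
noncomputable def BC (m n : ℤ) (a b : ℕ) (ha : 1 ≤ a) (hb : b < N) :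
    CochainComplex (ModuleCat A) ℤ :=
  strand
    (fun i => if i = m then D.e (a : ZMod N) else if m < i ∧ i < n then D.e 0 else
      if i = n then D.e (b : ZMod N) else 0)
    (fun i => if i = m ∧ m + 1 < n then toP D a else
      if i = m ∧ m + 1 = n then qq D a b else
      if m < i ∧ i + 1 < n then cyc D else
      if m < i ∧ i + 1 = n then fromP D b else 0)
    (by
      intro i
      try dsimp only
      by_cases h1 : i = m ∧ m + 1 < n
      · rw [if_pos h1, if_neg (show ¬ (i + 1 = m) by omega),
          if_pos (show m < i + 1 ∧ i + 1 < n by omega)]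
        exact toP_mul_e D a
      · by_cases h1' : i = m ∧ m + 1 = n
        · rw [if_neg h1, if_pos h1', if_neg (show ¬ (i + 1 = m) by omega),
            if_neg (show ¬ (m < i + 1 ∧ i + 1 < n) by omega),
            if_pos (show i + 1 = n by omega)]
          exact qq_mul_e D a b
        · by_cases h2 : m < i ∧ i + 1 < n
          · rw [if_neg h1, if_neg h1', if_pos h2, if_neg (show ¬ (i + 1 = m) by omega),
              if_pos (show m < i + 1 ∧ i + 1 < n by omega)]
            exact cyc_mul_e D
          · by_cases h3 : m < i ∧ i + 1 = n
            · rw [if_neg h1, if_neg h1', if_neg h2, if_pos h3,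
                if_neg (show ¬ (i + 1 = m) by omega),
                if_neg (show ¬ (m < i + 1 ∧ i + 1 < n) by omega),
                if_pos (show i + 1 = n by omega)]
              exact fromP_mul_e D b
            · rw [if_neg h1, if_neg h1', if_neg h2, if_neg h3, zero_mul])
    (by
      intro i
      try dsimp only
      by_cases h1 : i = m ∧ m + 1 < n
      · by_cases h2 : m < i + 1 ∧ i + 1 + 1 < n
        · rw [if_pos h1, if_neg (show ¬ (i + 1 = m ∧ m + 1 < n) by omega),
            if_neg (show ¬ (i + 1 = m ∧ m + 1 = n) by omega), if_pos h2]
          exact toP_mul_cyc D ha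
        · by_cases h3 : m < i + 1 ∧ i + 1 + 1 = n
          · rw [if_pos h1, if_neg (show ¬ (i + 1 = m ∧ m + 1 < n) by omega),
              if_neg (show ¬ (i + 1 = m ∧ m + 1 = n) by omega), if_neg h2, if_pos h3]
            exact toP_mul_fromP D ha hb
          · rw [if_pos h1, if_neg (show ¬ (i + 1 = m ∧ m + 1 < n) by omega),
              if_neg (show ¬ (i + 1 = m ∧ m + 1 = n) by omega), if_neg h2, if_neg h3,
              mul_zero]
      · by_cases h1' : i = m ∧ m + 1 = n
        · rw [if_neg h1, if_pos h1', if_neg (show ¬ (i + 1 = m ∧ m + 1 < n) by omega),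
            if_neg (show ¬ (i + 1 = m ∧ m + 1 = n) by omega),
            if_neg (show ¬ (m < i + 1 ∧ i + 1 + 1 < n) by omega),
            if_neg (show ¬ (m < i + 1 ∧ i + 1 + 1 = n) by omega), mul_zero]
        · by_cases h2 : m < i ∧ i + 1 < n
          · by_cases h3 : m < i + 1 ∧ i + 1 + 1 < n
            · rw [if_neg h1, if_neg h1', if_pos h2,
                if_neg (show ¬ (i + 1 = m ∧ m + 1 < n) by omega),
                if_neg (show ¬ (i + 1 = m ∧ m + 1 = n) by omega), if_pos h3]
              exact cyc_mul_cyc D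
            · by_cases h4 : m < i + 1 ∧ i + 1 + 1 = n
              · rw [if_neg h1, if_neg h1', if_pos h2,
                  if_neg (show ¬ (i + 1 = m ∧ m + 1 < n) by omega),
                  if_neg (show ¬ (i + 1 = m ∧ m + 1 = n) by omega), if_neg h3, if_pos h4]
                exact cyc_mul_fromP D hb
              · rw [if_neg h1, if_neg h1', if_pos h2,
                  if_neg (show ¬ (i + 1 = m ∧ m + 1 < n) by omega),
                  if_neg (show ¬ (i + 1 = m ∧ m + 1 = n) by omega), if_neg h3, if_neg h4,
                  mul_zero]
          · by_cases h3 : m < i ∧ i + 1 = n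
            · rw [if_neg h1, if_neg h1', if_neg h2, if_pos h3,
                if_neg (show ¬ (i + 1 = m ∧ m + 1 < n) by omega),
                if_neg (show ¬ (i + 1 = m ∧ m + 1 = n) by omega),
                if_neg (show ¬ (m < i + 1 ∧ i + 1 + 1 < n) by omega),
                if_neg (show ¬ (m < i + 1 ∧ i + 1 + 1 = n) by omega), mul_zero]
            · rw [if_neg h1, if_neg h1', if_neg h2, if_neg h3, zero_mul])

/-- The complex `Z_{m,a,b}`. -/
noncomputable def ZC (m : ℤ) (a b : ℕ) : CochainComplex (ModuleCat A) ℤ :=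
  strand
    (fun i => if i = m then D.e (a : ZMod N) else if i = m + 1 then D.e (b : ZMod N) else 0)
    (fun i => if i = m then qq D a b else 0)
    (by
      intro i
      try dsimp only
      by_cases h : i = m
      · rw [if_pos h, if_neg (show ¬ (i + 1 = m) by omega), if_pos (show i + 1 = m + 1 by omega)]
        exact qq_mul_e D a b
      · rw [if_neg h, zero_mul])
    (by
      intro i
      try dsimp only
      by_cases h : i = m
      · rw [if_pos h, if_neg (show ¬ (i + 1 = m) by omega), mul_zero]
      · rw [if_neg h, zero_mul])

end Complexes

end PaperCZ

namespace PaperCZ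

section Lam

variable {N : ℕ} [NeZero N] {A : Type*} [Ring A]

/-- A vertex `v` is a "bad" starting vertex when the length-two path starting at `v`
is one of the `r` relations, i.e. `v = j - 1` for some `j < r`. -/
def BadVertex (N r : ℕ) (v : ZMod N) : Prop := ∃ j : ℕ, j < r ∧ v = (j : ZMod N) - 1

/-- The path of length `ℓ` starting at vertex `i` avoids all relations. -/
def AdmissiblePath (N r : ℕ) (i : ZMod N) (ℓ : ℕ) : Prop :=
  ∀ t : ℕ, t + 2 ≤ ℓ → ¬ BadVertex N r (i + (t : ZMod N))

/-- `A` is presented by the cyclic quiver with relations: the images of the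
admissible paths form a `k`-basis. -/
def IsCyclicNakayama (k : Type*) [Field k] [Algebra k A] {r : ℕ}
    (D : CyclicNakayamaData N r A) : Prop :=
  ∃ bas : Module.Basis {p : ZMod N × ℕ // AdmissiblePath N r p.1 p.2} k A,
    ∀ p, bas p = D.path p.1.1 p.1.2

/-- The index set `Λ` of the complexes `X_{m,n}`, `L_{m,n,a}`, `R_{m,n,b}`,
`B_{m,n,a,b}`, `Z_{m,a,b}` (for `r = 1`). -/
inductive LamIdx (N : ℕ) : Type where
  | X : ∀ (m n : ℤ), m ≤ n → LamIdx N
  | L : ∀ (m n : ℤ), m ≤ n → ∀ a : ℕ, 1 ≤ a → a < N → LamIdx N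
  | R : ∀ (m n : ℤ), m ≤ n → ∀ b : ℕ, 1 ≤ b → b < N → LamIdx N
  | B : ∀ (m n : ℤ), m + 2 ≤ n → ∀ a b : ℕ, 1 ≤ a → a < N → 1 ≤ b → b < N → LamIdx N
  | Z : ∀ (m : ℤ) (a b : ℕ), 1 ≤ b → b < a → a < N → LamIdx N

variable (D : CyclicNakayamaData N 1 A)

/-- The underlying cochain complex of a member of `Λ`. -/
noncomputable def LamIdx.toCplx : LamIdx N → CochainComplex (ModuleCat A) ℤ
  | .X m n _ => XC D m n
  | .L m n _ a ha _ => LC D m n a ha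
  | .R m n _ b _ hb => RC D m n b hb
  | .B m n _ a b ha _ _ hb => BC D m n a b ha hb
  | .Z m a b _ _ _ => ZC D m a b

/-- The lower end of the support. -/
def LamIdx.lo : LamIdx N → ℤ
  | .X m _ _ => m
  | .L m _ _ _ _ _ => m
  | .R m _ _ _ _ _ => m
  | .B m _ _ _ _ _ _ _ _ => m
  | .Z m _ _ _ _ _ => m

/-- The upper end of the support. -/
def LamIdx.hi : LamIdx N → ℤ
  | .X _ n _ => n
  | .L _ n _ _ _ _ => n
  | .R _ n _ _ _ _ => n
  | .B _ n _ _ _ _ _ _ _ => n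
  | .Z m _ _ _ _ _ => m + 1

/-- The member of `Λ`, as an object of the (bounded) homotopy category. -/
noncomputable def Kob (I : LamIdx N) : HomotopyCategory (ModuleCat A) (ComplexShape.up ℤ) :=
  (HomotopyCategory.quotient (ModuleCat A) (ComplexShape.up ℤ)).obj (I.toCplx D)

/-- A bounded complex of finite projective modules. -/
def GoodCplx (C : CochainComplex (ModuleCat A) ℤ) : Prop :=
  (∃ a b : ℤ, ∀ n : ℤ, (n < a ∨ b < n) → IsZero (C.X n)) ∧
  (∀ n : ℤ, Projective (C.X n) ∧ Module.Finite A (C.X n))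

/-- Membership in `K^b(A-proj)`, as a full subcategory of the homotopy category:
the objects isomorphic to bounded complexes of finite projective modules. -/
def InKbProj (X : HomotopyCategory (ModuleCat A) (ComplexShape.up ℤ)) : Prop :=
  ∃ C : CochainComplex (ModuleCat A) ℤ, GoodCplx C ∧
    Nonempty (X ≅ (HomotopyCategory.quotient (ModuleCat A) (ComplexShape.up ℤ)).obj C)

/-- Indecomposability of `X` inside the full subcategory of objects satisfying `P`:
`X` is nonzero and admits no biproduct decomposition into two nonzero objects
satisfying `P`. -/
def IndecIn {T : Type*} [Category T] [Preadditive T] (P : T → Prop) (X : T) : Prop :=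
  ¬ IsZero X ∧ ∀ (Y Z : T), P Y → P Z → ∀ (i : Y ⟶ X) (p : X ⟶ Y) (j : Z ⟶ X) (q : X ⟶ Z),
    i ≫ p = 𝟙 Y → j ≫ q = 𝟙 Z → i ≫ q = 0 → j ≫ p = 0 → p ≫ i + q ≫ j = 𝟙 X →
    IsZero Y ∨ IsZero Z

end Lam

end PaperCZ

namespace PaperCZ

section Delta

variable {N : ℕ} [NeZero N] {A : Type*} [Ring A]

/-- A chain map between strand complexes, given by right multiplications. -/
noncomputable def strandMap (ε p : ℤ → A) (hp : ∀ i, p i * ε (i + 1) = p i)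
    (hsq : ∀ i, p i * p (i + 1) = 0)
    (ε' p' : ℤ → A) (hp' : ∀ i, p' i * ε' (i + 1) = p' i)
    (hsq' : ∀ i, p' i * p' (i + 1) = 0)
    (q : ℤ → A) (hq : ∀ i, q i * ε' i = q i)
    (hcomm : ∀ i, p i * q (i + 1) = q i * p' i) :
    strand ε p hp hsq ⟶ strand ε' p' hp' hsq' :=
  CochainComplex.ofHom (fun i => rmul (ε i) (hq i))
    (fun i => by
      dsimp only [strand]
      rw [CochainComplex.of_d, CochainComplex.of_d]
      ext x
      apply Subtype.ext
      change (x.1 * q i) * p' i = (x.1 * p i) * q (i + 1)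
      rw [mul_assoc, mul_assoc, hcomm i])

variable (D : CyclicNakayamaData N 1 A)

/-- The almost-vanishing endomorphism `Δ_{m,n}` of `X_{m,n}`: the chain map whose
component in degree `m` is `φ` and which vanishes elsewhere. -/
noncomputable def DeltaC (m n : ℤ) (h : m ≤ n) : XC D m n ⟶ XC D m n :=
  strandMap _ _ _ _ _ _ _ _
    (fun i => if i = m then cyc D else 0)
    (by
      intro i
      try dsimp only
      by_cases hi : i = m
      · rw [if_pos hi, if_pos (show m ≤ i ∧ i ≤ n by omega)]
        exact cyc_mul_e D
      · rw [if_neg hi, zero_mul])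
    (by
      intro i
      try dsimp only
      by_cases him : i = m
      · rw [him, if_neg (show ¬ (m + 1 = m) by omega), mul_zero, if_pos rfl]
        by_cases hmn : m ≤ m ∧ m < n
        · rw [if_pos hmn, cyc_mul_cyc D]
        · rw [if_neg hmn, mul_zero]
      · rw [if_neg him]
        by_cases him1 : i + 1 = m
        · rw [if_pos him1, if_neg (show ¬ (m ≤ i ∧ i < n) by omega), zero_mul, zero_mul]
        · rw [if_neg him1, mul_zero, zero_mul])

/-- `Δ_{m,n}` as an endomorphism in the homotopy category. -/
noncomputable def DeltaK (m n : ℤ) (h : m ≤ n) :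
    Kob D (LamIdx.X m n h) ⟶ Kob D (LamIdx.X m n h) :=
  (HomotopyCategory.quotient (ModuleCat A) (ComplexShape.up ℤ)).map (DeltaC D m n h)

/-- Almost-vanishing endomorphism, within the full subcategory of objects
satisfying `P`. -/
def AlmostVanishingIn {T : Type*} [Category T] [Preadditive T] (P : T → Prop)
    {X : T} (Δ : X ⟶ X) : Prop :=
  Δ ≠ 0 ∧ ¬ IsIso Δ ∧
  (∀ Y, P Y → ∀ f : Y ⟶ X, ¬ (∃ s : X ⟶ Y, s ≫ f = 𝟙 X) → f ≫ Δ = 0) ∧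
  (∀ Z, P Z → ∀ g : X ⟶ Z, ¬ (∃ rr : Z ⟶ X, g ≫ rr = 𝟙 X) → Δ ≫ g = 0)

end Delta

end PaperCZ

namespace PaperCZ

section ELemmas

variable {N : ℕ} [NeZero N] {A : Type*} [Ring A]
variable (D : CyclicNakayamaData N 1 A)

lemma e_mul_e (v : ZMod N) : D.e v * D.e v = D.e v := by simpa using D.idem v v

lemma e_mul_cyc : D.e 0 * cyc D = cyc D := by
  have h := D.e_mul_path (0 : ZMod N) N
  rwa [show (0 : ZMod N) + (N : ZMod N) = 0 by rw [ZMod.natCast_self, add_zero]] at h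

lemma e_mul_toP (a : ℕ) : D.e (a : ZMod N) * toP D a = toP D a := by
  have h := D.e_mul_path (0 : ZMod N) a
  rwa [zero_add] at h

lemma e_mul_fromP {b : ℕ} (hb : b ≤ N) : D.e 0 * fromP D b = fromP D b := by
  have h := D.e_mul_path (b : ZMod N) (N - b)
  rwa [cast_add_sub_self hb] at h

end ELemmas

end PaperCZ

namespace PaperCZ

section Generators

variable {N : ℕ} [NeZero N] {A : Type*} [Ring A]
variable (D : CyclicNakayamaData N 1 A)

/-- The canonical inclusion `X_{m,n} → X_{m−1,n}`. -/
noncomputable def incXC (m n : ℤ) : XC D m n ⟶ XC D (m - 1) n :=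
  strandMap _ _ _ _ _ _ _ _
    (fun i => if m ≤ i ∧ i ≤ n then D.e 0 else 0)
    (by
      intro i
      try dsimp only
      by_cases h : m ≤ i ∧ i ≤ n
      · rw [if_pos h, if_pos (show m - 1 ≤ i ∧ i ≤ n by omega)]
        exact e_mul_e D 0
      · rw [if_neg h, zero_mul])
    (by
      intro i
      try dsimp only
      by_cases h : m ≤ i ∧ i < n
      · rw [if_pos h, if_pos (show m ≤ i + 1 ∧ i + 1 ≤ n by omega),
          if_pos (show m ≤ i ∧ i ≤ n by omega), if_pos (show m - 1 ≤ i ∧ i < n by omega),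
          cyc_mul_e D, e_mul_cyc D]
      · rw [if_neg h, zero_mul]
        by_cases h2 : m ≤ i ∧ i ≤ n
        · rw [if_pos h2, if_neg (show ¬ (m - 1 ≤ i ∧ i < n) by omega), mul_zero]
        · rw [if_neg h2, zero_mul])

/-- The canonical inclusion `X_{m,n} → L_{m−1,n,a}`. -/
noncomputable def incXLC (m n : ℤ) (a : ℕ) (ha : 1 ≤ a) : XC D m n ⟶ LC D (m - 1) n a ha :=
  strandMap _ _ _ _ _ _ _ _
    (fun i => if m ≤ i ∧ i ≤ n then D.e 0 else 0)
    (by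
      intro i
      try dsimp only
      by_cases h : m ≤ i ∧ i ≤ n
      · rw [if_pos h, if_neg (show ¬ (i = m - 1) by omega),
          if_pos (show m - 1 < i ∧ i ≤ n by omega)]
        exact e_mul_e D 0
      · rw [if_neg h, zero_mul])
    (by
      intro i
      try dsimp only
      by_cases h : m ≤ i ∧ i < n
      · rw [if_pos h, if_pos (show m ≤ i + 1 ∧ i + 1 ≤ n by omega),
          if_pos (show m ≤ i ∧ i ≤ n by omega),
          if_neg (show ¬ (i = m - 1 ∧ m - 1 < n) by omega),
          if_pos (show m - 1 < i ∧ i < n by omega), cyc_mul_e D, e_mul_cyc D]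
      · rw [if_neg h, zero_mul]
        by_cases h2 : m ≤ i ∧ i ≤ n
        · rw [if_pos h2, if_neg (show ¬ (i = m - 1 ∧ m - 1 < n) by omega),
            if_neg (show ¬ (m - 1 < i ∧ i < n) by omega), mul_zero]
        · rw [if_neg h2, zero_mul])

/-- The canonical inclusion `R_{m,n,b} → R_{m−1,n,b}`. -/
noncomputable def incRC (m n : ℤ) (b : ℕ) (hb : b < N) :
    RC D m n b hb ⟶ RC D (m - 1) n b hb :=
  strandMap _ _ _ _ _ _ _ _
    (fun i => if m ≤ i ∧ i < n then D.e 0 else if i = n ∧ m ≤ n then D.e (b : ZMod N) else 0)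
    (by
      intro i
      try dsimp only
      by_cases h : m ≤ i ∧ i < n
      · rw [if_pos h, if_pos (show m - 1 ≤ i ∧ i < n by omega)]
        exact e_mul_e D 0
      · by_cases h2 : i = n ∧ m ≤ n
        · rw [if_neg h, if_pos h2, if_neg (show ¬ (m - 1 ≤ i ∧ i < n) by omega),
            if_pos (show i = n by omega)]
          exact e_mul_e D (b : ZMod N)
        · rw [if_neg h, if_neg h2, zero_mul])
    (by
      intro i
      try dsimp only
      by_cases h1 : m ≤ i ∧ i + 1 < n
      · rw [if_pos h1, if_pos (show m ≤ i + 1 ∧ i + 1 < n by omega),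
          if_pos (show m ≤ i ∧ i < n by omega),
          if_pos (show m - 1 ≤ i ∧ i + 1 < n by omega), cyc_mul_e D, e_mul_cyc D]
      · by_cases h2 : m ≤ i ∧ i + 1 = n
        · rw [if_neg h1, if_pos h2, if_neg (show ¬ (m ≤ i + 1 ∧ i + 1 < n) by omega),
            if_pos (show i + 1 = n ∧ m ≤ n by omega),
            if_pos (show m ≤ i ∧ i < n by omega),
            if_neg (show ¬ (m - 1 ≤ i ∧ i + 1 < n) by omega),
            if_pos (show m - 1 ≤ i ∧ i + 1 = n by omega),
            fromP_mul_e D b, e_mul_fromP D (le_of_lt hb)]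
        · rw [if_neg h1, if_neg h2, zero_mul]
          by_cases h3 : m ≤ i ∧ i < n
          · exact absurd h3 (by omega)
          · by_cases h4 : i = n ∧ m ≤ n
            · rw [if_neg h3, if_pos h4, if_neg (show ¬ (m - 1 ≤ i ∧ i + 1 < n) by omega),
                if_neg (show ¬ (m - 1 ≤ i ∧ i + 1 = n) by omega), mul_zero]
            · rw [if_neg h3, if_neg h4, zero_mul])

/-- The canonical inclusion `R_{m,n,b} → B_{m−1,n,a,b}` (for `m < n`). -/
noncomputable def incRBC (m n : ℤ) (hmn : m < n) (a b : ℕ) (ha : 1 ≤ a) (hb : b < N) :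
    RC D m n b hb ⟶ BC D (m - 1) n a b ha hb :=
  strandMap _ _ _ _ _ _ _ _
    (fun i => if m ≤ i ∧ i < n then D.e 0 else if i = n then D.e (b : ZMod N) else 0)
    (by
      intro i
      try dsimp only
      by_cases h : m ≤ i ∧ i < n
      · rw [if_pos h, if_neg (show ¬ (i = m - 1) by omega),
          if_pos (show m - 1 < i ∧ i < n by omega)]
        exact e_mul_e D 0
      · by_cases h2 : i = n
        · rw [if_neg h, if_pos h2, if_neg (show ¬ (i = m - 1) by omega),
            if_neg (show ¬ (m - 1 < i ∧ i < n) by omega)]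
          exact e_mul_e D (b : ZMod N)
        · rw [if_neg h, if_neg h2, zero_mul])
    (by
      intro i
      try dsimp only
      by_cases h1 : m ≤ i ∧ i + 1 < n
      · rw [if_pos h1, if_pos (show m ≤ i + 1 ∧ i + 1 < n by omega),
          if_pos (show m ≤ i ∧ i < n by omega),
          if_neg (show ¬ (i = m - 1 ∧ m - 1 + 1 < n) by omega),
          if_neg (show ¬ (i = m - 1 ∧ m - 1 + 1 = n) by omega),
          if_pos (show m - 1 < i ∧ i + 1 < n by omega), cyc_mul_e D, e_mul_cyc D]
      · by_cases h2 : m ≤ i ∧ i + 1 = n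
        · rw [if_neg h1, if_pos h2, if_neg (show ¬ (m ≤ i + 1 ∧ i + 1 < n) by omega),
            if_pos (show i + 1 = n by omega),
            if_pos (show m ≤ i ∧ i < n by omega),
            if_neg (show ¬ (i = m - 1 ∧ m - 1 + 1 < n) by omega),
            if_neg (show ¬ (i = m - 1 ∧ m - 1 + 1 = n) by omega),
            if_neg (show ¬ (m - 1 < i ∧ i + 1 < n) by omega),
            if_pos (show m - 1 < i ∧ i + 1 = n by omega),
            fromP_mul_e D b, e_mul_fromP D (le_of_lt hb)]
        · rw [if_neg h1, if_neg h2, zero_mul]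
          by_cases h3 : m ≤ i ∧ i < n
          · exact absurd h3 (by omega)
          · by_cases h4 : i = n
            · rw [if_neg h3, if_pos h4,
                if_neg (show ¬ (i = m - 1 ∧ m - 1 + 1 < n) by omega),
                if_neg (show ¬ (i = m - 1 ∧ m - 1 + 1 = n) by omega),
                if_neg (show ¬ (m - 1 < i ∧ i + 1 < n) by omega),
                if_neg (show ¬ (m - 1 < i ∧ i + 1 = n) by omega), mul_zero]
            · rw [if_neg h3, if_neg h4, zero_mul])

/-- The canonical inclusion `L_{m,m,b} → Z_{m−1,a,b}` (for `b < a`). -/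
noncomputable def incLZC (m : ℤ) (a b : ℕ) (hb : 1 ≤ b) :
    LC D m m b hb ⟶ ZC D (m - 1) a b :=
  strandMap _ _ _ _ _ _ _ _
    (fun i => if i = m then D.e (b : ZMod N) else 0)
    (by
      intro i
      try dsimp only
      by_cases h : i = m
      · rw [if_pos h, if_neg (show ¬ (i = m - 1) by omega),
          if_pos (show i = m - 1 + 1 by omega)]
        exact e_mul_e D (b : ZMod N)
      · rw [if_neg h, zero_mul])
    (by
      intro i
      try dsimp only
      rw [if_neg (show ¬ (i = m ∧ m < m) by omega),
        if_neg (show ¬ (m < i ∧ i < m) by omega), zero_mul]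
      by_cases h : i = m
      · rw [if_pos h, if_neg (show ¬ (i = m - 1) by omega), mul_zero]
      · rw [if_neg h, zero_mul])

/-- The canonical projection `X_{m,n} → X_{m,n−1}`. -/
noncomputable def prXC (m n : ℤ) : XC D m n ⟶ XC D m (n - 1) :=
  strandMap _ _ _ _ _ _ _ _
    (fun i => if m ≤ i ∧ i ≤ n - 1 then D.e 0 else 0)
    (by
      intro i
      try dsimp only
      by_cases h : m ≤ i ∧ i ≤ n - 1
      · rw [if_pos h]
        exact e_mul_e D 0
      · rw [if_neg h, zero_mul])
    (by
      intro i
      try dsimp only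
      by_cases h : m ≤ i ∧ i < n - 1
      · rw [if_pos (show m ≤ i ∧ i < n by omega),
          if_pos (show m ≤ i + 1 ∧ i + 1 ≤ n - 1 by omega),
          if_pos (show m ≤ i ∧ i ≤ n - 1 by omega), if_pos h, cyc_mul_e D, e_mul_cyc D]
      · by_cases h2 : m ≤ i ∧ i < n
        · rw [if_pos h2, if_neg (show ¬ (m ≤ i + 1 ∧ i + 1 ≤ n - 1) by omega), mul_zero,
            if_pos (show m ≤ i ∧ i ≤ n - 1 by omega), if_neg h, mul_zero]
        · rw [if_neg h2, zero_mul]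
          by_cases h3 : m ≤ i ∧ i ≤ n - 1
          · exact absurd h3 (by omega)
          · rw [if_neg h3, zero_mul])

/-- The canonical projection `L_{m,n,a} → L_{m,n−1,a}`. -/
noncomputable def prLC (m n : ℤ) (a : ℕ) (ha : 1 ≤ a) : LC D m n a ha ⟶ LC D m (n - 1) a ha :=
  strandMap _ _ _ _ _ _ _ _
    (fun i => if i = m then D.e (a : ZMod N) else if m < i ∧ i ≤ n - 1 then D.e 0 else 0)
    (by
      intro i
      try dsimp only
      by_cases h : i = m
      · rw [if_pos h]
        exact e_mul_e D (a : ZMod N)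
      · by_cases h2 : m < i ∧ i ≤ n - 1
        · rw [if_neg h, if_pos h2]
          exact e_mul_e D 0
        · rw [if_neg h, if_neg h2, zero_mul])
    (by
      intro i
      try dsimp only
      by_cases h1 : i = m ∧ m < n - 1
      · rw [if_pos (show i = m ∧ m < n by omega),
          if_neg (show ¬ (i + 1 = m) by omega),
          if_pos (show m < i + 1 ∧ i + 1 ≤ n - 1 by omega),
          if_pos (show i = m by omega), if_pos h1, toP_mul_e D a, e_mul_toP D a]
      · by_cases h1' : i = m ∧ m + 1 = n
        · rw [if_pos (show i = m ∧ m < n by omega),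
            if_neg (show ¬ (i + 1 = m) by omega),
            if_neg (show ¬ (m < i + 1 ∧ i + 1 ≤ n - 1) by omega), mul_zero,
            if_pos (show i = m by omega),
            if_neg (show ¬ (i = m ∧ m < n - 1) by omega),
            if_neg (show ¬ (m < i ∧ i < n - 1) by omega), mul_zero]
        · by_cases h2 : m < i ∧ i < n - 1
          · rw [if_neg (show ¬ (i = m ∧ m < n) by omega),
              if_pos (show m < i ∧ i < n by omega),
              if_neg (show ¬ (i + 1 = m) by omega),
              if_pos (show m < i + 1 ∧ i + 1 ≤ n - 1 by omega),
              if_neg (show ¬ (i = m) by omega),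
              if_pos (show m < i ∧ i ≤ n - 1 by omega),
              if_neg (show ¬ (i = m ∧ m < n - 1) by omega),
              if_pos h2, cyc_mul_e D, e_mul_cyc D]
          · by_cases h3 : m < i ∧ i + 1 = n
            · rw [if_neg (show ¬ (i = m ∧ m < n) by omega),
                if_pos (show m < i ∧ i < n by omega),
                if_neg (show ¬ (i + 1 = m) by omega),
                if_neg (show ¬ (m < i + 1 ∧ i + 1 ≤ n - 1) by omega), mul_zero,
                if_neg (show ¬ (i = m) by omega),
                if_pos (show m < i ∧ i ≤ n - 1 by omega),
                if_neg (show ¬ (i = m ∧ m < n - 1) by omega),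
                if_neg (show ¬ (m < i ∧ i < n - 1) by omega), mul_zero]
            · rw [if_neg (show ¬ (i = m ∧ m < n) by omega),
                if_neg (show ¬ (m < i ∧ i < n) by omega), zero_mul]
              by_cases h4 : i = m
              · rw [if_pos h4, if_neg (show ¬ (i = m ∧ m < n - 1) by omega),
                  if_neg (show ¬ (m < i ∧ i < n - 1) by omega), mul_zero]
              · by_cases h5 : m < i ∧ i ≤ n - 1
                · exact absurd h5 (by omega)
                · rw [if_neg h4, if_neg h5, zero_mul])

/-- The canonical projection `R_{m,n,b} → X_{m,n−1}` (for `m < n`). -/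
noncomputable def prRXC (m n : ℤ) (hmn : m < n) (b : ℕ) (hb : b < N) :
    RC D m n b hb ⟶ XC D m (n - 1) :=
  strandMap _ _ _ _ _ _ _ _
    (fun i => if m ≤ i ∧ i ≤ n - 1 then D.e 0 else 0)
    (by
      intro i
      try dsimp only
      by_cases h : m ≤ i ∧ i ≤ n - 1
      · rw [if_pos h]
        exact e_mul_e D 0
      · rw [if_neg h, zero_mul])
    (by
      intro i
      try dsimp only
      by_cases h1 : m ≤ i ∧ i + 1 < n
      · rw [if_pos h1, if_pos (show m ≤ i + 1 ∧ i + 1 ≤ n - 1 by omega),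
          if_pos (show m ≤ i ∧ i ≤ n - 1 by omega),
          if_pos (show m ≤ i ∧ i < n - 1 by omega), cyc_mul_e D, e_mul_cyc D]
      · by_cases h2 : m ≤ i ∧ i + 1 = n
        · rw [if_neg h1, if_pos h2, if_neg (show ¬ (m ≤ i + 1 ∧ i + 1 ≤ n - 1) by omega),
            mul_zero, if_pos (show m ≤ i ∧ i ≤ n - 1 by omega),
            if_neg (show ¬ (m ≤ i ∧ i < n - 1) by omega), mul_zero]
        · rw [if_neg h1, if_neg h2, zero_mul]
          by_cases h3 : m ≤ i ∧ i ≤ n - 1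
          · exact absurd h3 (by omega)
          · rw [if_neg h3, zero_mul])

/-- The canonical projection `B_{m,n,a,b} → L_{m,n−1,a}` (for `m + 2 ≤ n`). -/
noncomputable def prBLC (m n : ℤ) (hmn : m + 2 ≤ n) (a b : ℕ) (ha : 1 ≤ a) (hb : b < N) :
    BC D m n a b ha hb ⟶ LC D m (n - 1) a ha :=
  strandMap _ _ _ _ _ _ _ _
    (fun i => if i = m then D.e (a : ZMod N) else if m < i ∧ i ≤ n - 1 then D.e 0 else 0)
    (by
      intro i
      try dsimp only
      by_cases h : i = m
      · rw [if_pos h]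
        exact e_mul_e D (a : ZMod N)
      · by_cases h2 : m < i ∧ i ≤ n - 1
        · rw [if_neg h, if_pos h2]
          exact e_mul_e D 0
        · rw [if_neg h, if_neg h2, zero_mul])
    (by
      intro i
      try dsimp only
      by_cases h1 : i = m
      · rw [if_pos (show i = m ∧ m + 1 < n by omega),
          if_neg (show ¬ (i + 1 = m) by omega),
          if_pos (show m < i + 1 ∧ i + 1 ≤ n - 1 by omega),
          if_pos h1, if_pos (show i = m ∧ m < n - 1 by omega),
          toP_mul_e D a, e_mul_toP D a]
      · by_cases h2 : m < i ∧ i + 1 < n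
        · rw [if_neg (show ¬ (i = m ∧ m + 1 < n) by omega),
            if_neg (show ¬ (i = m ∧ m + 1 = n) by omega),
            if_pos h2, if_neg (show ¬ (i + 1 = m) by omega),
            if_pos (show m < i + 1 ∧ i + 1 ≤ n - 1 by omega),
            if_neg h1, if_pos (show m < i ∧ i ≤ n - 1 by omega),
            if_neg (show ¬ (i = m ∧ m < n - 1) by omega),
            if_pos (show m < i ∧ i < n - 1 by omega), cyc_mul_e D, e_mul_cyc D]
        · by_cases h3 : m < i ∧ i + 1 = n
          · rw [if_neg (show ¬ (i = m ∧ m + 1 < n) by omega),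
              if_neg (show ¬ (i = m ∧ m + 1 = n) by omega),
              if_neg h2, if_pos h3, if_neg (show ¬ (i + 1 = m) by omega),
              if_neg (show ¬ (m < i + 1 ∧ i + 1 ≤ n - 1) by omega), mul_zero,
              if_neg h1, if_pos (show m < i ∧ i ≤ n - 1 by omega),
              if_neg (show ¬ (i = m ∧ m < n - 1) by omega),
              if_neg (show ¬ (m < i ∧ i < n - 1) by omega), mul_zero]
          · rw [if_neg (show ¬ (i = m ∧ m + 1 < n) by omega),
              if_neg (show ¬ (i = m ∧ m + 1 = n) by omega),
              if_neg h2, if_neg h3, zero_mul, if_neg h1]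
            by_cases h4 : m < i ∧ i ≤ n - 1
            · exact absurd h4 (by omega)
            · rw [if_neg h4, zero_mul])

/-- The canonical projection `Z_{m,a,b} → L_{m,m,a}`. -/
noncomputable def prZLC (m : ℤ) (a b : ℕ) (ha : 1 ≤ a) :
    ZC D m a b ⟶ LC D m m a ha :=
  strandMap _ _ _ _ _ _ _ _
    (fun i => if i = m then D.e (a : ZMod N) else 0)
    (by
      intro i
      try dsimp only
      by_cases h : i = m
      · rw [if_pos h, if_pos h]
        exact e_mul_e D (a : ZMod N)
      · rw [if_neg h, zero_mul])
    (by
      intro i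
      try dsimp only
      rw [if_neg (show ¬ (i = m ∧ m < m) by omega),
        if_neg (show ¬ (m < i ∧ i < m) by omega), mul_zero]
      by_cases h : i = m
      · rw [if_pos h, if_neg (show ¬ (i + 1 = m) by omega), mul_zero]
      · rw [if_neg h, zero_mul])

end Generators

end PaperCZ

namespace PaperCZ

section IncProj

variable {N : ℕ} [NeZero N] {A : Type*} [Ring A]
variable (D : CyclicNakayamaData N 1 A)

/-- The class of inclusions: compositions of the canonical inclusion chain maps. -/
inductive IsInclusion : ∀ {I J : LamIdx N}, (Kob D I ⟶ Kob D J) → Prop where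
  | id : ∀ I : LamIdx N, IsInclusion (𝟙 (Kob D I))
  | incX : ∀ (m n : ℤ) (h : m ≤ n) (h' : m - 1 ≤ n),
      IsInclusion (I := .X m n h) (J := .X (m - 1) n h')
        ((HomotopyCategory.quotient (ModuleCat A) (ComplexShape.up ℤ)).map (incXC D m n))
  | incXL : ∀ (m n : ℤ) (h : m ≤ n) (h' : m - 1 ≤ n) (a : ℕ) (ha : 1 ≤ a) (haN : a < N),
      IsInclusion (I := .X m n h) (J := .L (m - 1) n h' a ha haN)
        ((HomotopyCategory.quotient (ModuleCat A) (ComplexShape.up ℤ)).map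
          (incXLC D m n a ha))
  | incR : ∀ (m n : ℤ) (h : m ≤ n) (h' : m - 1 ≤ n) (b : ℕ) (hb : 1 ≤ b) (hbN : b < N),
      IsInclusion (I := .R m n h b hb hbN) (J := .R (m - 1) n h' b hb hbN)
        ((HomotopyCategory.quotient (ModuleCat A) (ComplexShape.up ℤ)).map
          (incRC D m n b hbN))
  | incRB : ∀ (m n : ℤ) (hmn : m < n) (h : m ≤ n) (h' : m - 1 + 2 ≤ n) (a b : ℕ)
      (ha : 1 ≤ a) (haN : a < N) (hb : 1 ≤ b) (hbN : b < N),
      IsInclusion (I := .R m n h b hb hbN) (J := .B (m - 1) n h' a b ha haN hb hbN)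
        ((HomotopyCategory.quotient (ModuleCat A) (ComplexShape.up ℤ)).map
          (incRBC D m n hmn a b ha hbN))
  | incLZ : ∀ (m : ℤ) (a b : ℕ) (hb : 1 ≤ b) (hba : b < a) (haN : a < N),
      IsInclusion (I := .L m m (le_refl m) b hb (Nat.lt_trans hba haN))
        (J := .Z (m - 1) a b hb hba haN)
        ((HomotopyCategory.quotient (ModuleCat A) (ComplexShape.up ℤ)).map
          (incLZC D m a b hb))
  | comp : ∀ {I J K : LamIdx N} (f : Kob D I ⟶ Kob D J) (g : Kob D J ⟶ Kob D K),
      IsInclusion f → IsInclusion g → IsInclusion (f ≫ g)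

/-- The class of projections: compositions of the canonical projection chain maps. -/
inductive IsProjection : ∀ {I J : LamIdx N}, (Kob D I ⟶ Kob D J) → Prop where
  | id : ∀ I : LamIdx N, IsProjection (𝟙 (Kob D I))
  | prX : ∀ (m n : ℤ) (h : m ≤ n) (h' : m ≤ n - 1),
      IsProjection (I := .X m n h) (J := .X m (n - 1) h')
        ((HomotopyCategory.quotient (ModuleCat A) (ComplexShape.up ℤ)).map (prXC D m n))
  | prL : ∀ (m n : ℤ) (h : m ≤ n) (h' : m ≤ n - 1) (a : ℕ) (ha : 1 ≤ a) (haN : a < N),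
      IsProjection (I := .L m n h a ha haN) (J := .L m (n - 1) h' a ha haN)
        ((HomotopyCategory.quotient (ModuleCat A) (ComplexShape.up ℤ)).map
          (prLC D m n a ha))
  | prRX : ∀ (m n : ℤ) (hmn : m < n) (h : m ≤ n) (h' : m ≤ n - 1) (b : ℕ)
      (hb : 1 ≤ b) (hbN : b < N),
      IsProjection (I := .R m n h b hb hbN) (J := .X m (n - 1) h')
        ((HomotopyCategory.quotient (ModuleCat A) (ComplexShape.up ℤ)).map
          (prRXC D m n hmn b hbN))
  | prBL : ∀ (m n : ℤ) (hmn : m + 2 ≤ n) (h' : m ≤ n - 1) (a b : ℕ)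
      (ha : 1 ≤ a) (haN : a < N) (hb : 1 ≤ b) (hbN : b < N),
      IsProjection (I := .B m n hmn a b ha haN hb hbN) (J := .L m (n - 1) h' a ha haN)
        ((HomotopyCategory.quotient (ModuleCat A) (ComplexShape.up ℤ)).map
          (prBLC D m n hmn a b ha hbN))
  | prZL : ∀ (m : ℤ) (a b : ℕ) (hb : 1 ≤ b) (hba : b < a) (haN : a < N),
      IsProjection (I := .Z m a b hb hba haN)
        (J := .L m m (le_refl m) a (by omega) haN)
        ((HomotopyCategory.quotient (ModuleCat A) (ComplexShape.up ℤ)).map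
          (prZLC D m a b (by omega)))
  | comp : ∀ {I J K : LamIdx N} (f : Kob D I ⟶ Kob D J) (g : Kob D J ⟶ Kob D K),
      IsProjection f → IsProjection g → IsProjection (f ≫ g)

/-- A pair of supports `([m,n], [p,q])` is crossing when `m ≤ p ≤ n ≤ q`. -/
def CrossingPair (I J : LamIdx N) : Prop := I.lo ≤ J.lo ∧ J.lo ≤ I.hi ∧ I.hi ≤ J.hi

/-- A nonzero morphism `f : X → Y` in the homotopy category (with `supp X = [m,n]`,
`supp Y = [p,q]`) is crossing if every chain map representing its homotopy class is
nonzero in degree `n` and in degree `p`. -/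
def IsCrossingMor {I J : LamIdx N} (f : Kob D I ⟶ Kob D J) : Prop :=
  f ≠ 0 ∧ ∀ g : I.toCplx D ⟶ J.toCplx D,
    (HomotopyCategory.quotient (ModuleCat A) (ComplexShape.up ℤ)).map g = f →
      g.f I.hi ≠ 0 ∧ g.f J.lo ≠ 0

end IncProj

end PaperCZ

/-!
If `f` is not crossing, some chain map `g` representing it vanishes either in the top degree
of `X` or in the bottom degree of `Y`. In the first case `g` factors through the canonical
projection of `X` onto the member of `Λ` with support shortened at the top, since that
projection is an isomorphism in every lower degree; dually, in the second case `g` factors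
through the canonical inclusion into `Y` of the member shortened at the bottom. The crossing
condition survives the shortening (when the supports meet in a single degree, such a `g` is
zero), so induction on the total length of the supports gives the factorization.
-/

namespace HomologicalComplex

variable {ι V : Type*} [Category V] [HasZeroMorphisms V] {c : ComplexShape ι}

lemma exists_desc_of_isIso_or_isZero {C C' Y : HomologicalComplex V c} (π : C ⟶ C')
    (g : C ⟶ Y) (h : ∀ j, IsIso (π.f j) ∨ (IsZero (C'.X j) ∧ g.f j = 0)) :
    ∃ g' : C' ⟶ Y, π ≫ g' = g := by
  choose s hs using fun j => show ∃ s : C'.X j ⟶ Y.X j, π.f j ≫ s = g.f j by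
    rcases h j with hj | ⟨-, hgj⟩
    · exact ⟨inv (π.f j) ≫ g.f j, by simp⟩
    · exact ⟨0, by rw [comp_zero, hgj]⟩
  refine ⟨{ f := s, comm' := fun i j _ => ?_ }, by ext j; exact hs j⟩
  rcases h i with hi | ⟨hi, -⟩
  · rw [← cancel_epi (π.f i), reassoc_of% (hs i), g.comm, ← hs j, π.comm_assoc]
  · exact hi.eq_of_src _ _

lemma exists_lift_of_isIso_or_isZero {W C C' : HomologicalComplex V c} (m : C' ⟶ C)
    (g : W ⟶ C) (h : ∀ j, IsIso (m.f j) ∨ (IsZero (C'.X j) ∧ g.f j = 0)) :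
    ∃ g' : W ⟶ C', g' ≫ m = g := by
  choose s hs using fun j => show ∃ s : W.X j ⟶ C'.X j, s ≫ m.f j = g.f j by
    rcases h j with hj | ⟨-, hgj⟩
    · exact ⟨g.f j ≫ inv (m.f j), by simp⟩
    · exact ⟨0, by rw [zero_comp, hgj]⟩
  refine ⟨{ f := s, comm' := fun i j _ => ?_ }, by ext j; exact hs j⟩
  rcases h j with hj | ⟨hj, -⟩
  · rw [← cancel_mono (m.f j), Category.assoc, ← m.comm, reassoc_of% (hs i), g.comm,
      Category.assoc, hs j]
  · exact hj.eq_of_tgt _ _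

end HomologicalComplex

namespace PaperCZ

section Strand

variable {A : Type*} [Ring A]

lemma isZero_PM_zero : IsZero (PM A 0) := by
  have : Subsingleton (PM A 0) := ⟨fun x y => Subtype.ext <| by
    have hx : x.1 * 0 = x.1 := x.2
    have hy : y.1 * 0 = y.1 := y.2
    rw [← hx, ← hy, mul_zero, mul_zero]⟩
  exact ModuleCat.isZero_of_subsingleton _

lemma isIso_rmul {ε ε' p : A} (hp : p * ε' = p) (hε : ε' = ε) (hpε : p = ε) :
    IsIso (rmul ε hp) := by
  subst hε hpε
  convert IsIso.id (PM A p)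
  ext x
  exact Subtype.ext x.2

variable {ε p : ℤ → A} {hp : ∀ i, p i * ε (i + 1) = p i} {hsq : ∀ i, p i * p (i + 1) = 0}

lemma isZero_strand_X {j : ℤ} (h : ε j = 0) : IsZero ((strand ε p hp hsq).X j) := by
  change IsZero (PM A (ε j))
  rw [h]
  exact isZero_PM_zero

variable {ε' p' : ℤ → A} {hp' : ∀ i, p' i * ε' (i + 1) = p' i}
  {hsq' : ∀ i, p' i * p' (i + 1) = 0} {q : ℤ → A} {hq : ∀ i, q i * ε' i = q i}
  {hcomm : ∀ i, p i * q (i + 1) = q i * p' i}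

lemma isIso_strandMap_f {j : ℤ} (hε : ε' j = ε j) (hqε : q j = ε j) :
    IsIso ((strandMap ε p hp hsq ε' p' hp' hsq' q hq hcomm).f j) :=
  isIso_rmul (hq j) hε hqε

end Strand

section Lam

variable {N : ℕ} [NeZero N] {A : Type*} [Ring A] (D : CyclicNakayamaData N 1 A)

lemma LamIdx.isZero_toCplx_X (I : LamIdx N) {j : ℤ} (h : j < I.lo ∨ I.hi < j) :
    IsZero ((I.toCplx D).X j) := by
  cases I <;> simp only [LamIdx.lo, LamIdx.hi] at h <;>
    dsimp only [LamIdx.toCplx, XC, LC, RC, BC, ZC] <;>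
    exact isZero_strand_X (by split_ifs <;> first | rfl | omega)

lemma LamIdx.exists_isProjection_hi_sub_one (I : LamIdx N) (hI : I.lo < I.hi) :
    ∃ (I' : LamIdx N) (π : I.toCplx D ⟶ I'.toCplx D), I'.lo = I.lo ∧ I'.hi = I.hi - 1 ∧
      IsProjection D ((HomotopyCategory.quotient _ _).map π) ∧ ∀ j < I.hi, IsIso (π.f j) := by
  cases I <;> simp only [LamIdx.lo, LamIdx.hi] at hI ⊢
  case X m n h =>
    refine ⟨.X m (n - 1) (by omega), prXC D m n, rfl, rfl, .prX m n h _,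
      fun j hj => isIso_strandMap_f ?_ ?_⟩ <;> split_ifs <;> first | rfl | omega
  case L m n h a ha haN =>
    refine ⟨.L m (n - 1) (by omega) a ha haN, prLC D m n a ha, rfl, rfl, .prL m n h _ a ha haN,
      fun j hj => isIso_strandMap_f ?_ ?_⟩ <;> split_ifs <;> first | rfl | omega
  case R m n h b hb hbN =>
    refine ⟨.X m (n - 1) (by omega), prRXC D m n hI b hbN, rfl, rfl,
      .prRX m n hI h _ b hb hbN, fun j hj => isIso_strandMap_f ?_ ?_⟩ <;>
      split_ifs <;> first | rfl | omega
  case B m n h a b ha haN hb hbN =>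
    refine ⟨.L m (n - 1) (by omega) a ha haN, prBLC D m n h a b ha hbN, rfl, rfl,
      .prBL m n h _ a b ha haN hb hbN, fun j hj => isIso_strandMap_f ?_ ?_⟩ <;>
      split_ifs <;> first | rfl | omega
  case Z m a b hb hba haN =>
    refine ⟨.L m m le_rfl a (by omega) haN, prZLC D m a b (by omega), rfl, by simp,
      .prZL m a b hb hba haN, fun j hj => isIso_strandMap_f ?_ ?_⟩ <;>
      split_ifs <;> first | rfl | omega

lemma LamIdx.exists_isInclusion_lo_add_one (J : LamIdx N) (hJ : J.lo < J.hi) :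
    ∃ (J' : LamIdx N) (ι : J'.toCplx D ⟶ J.toCplx D), J'.lo = J.lo + 1 ∧ J'.hi = J.hi ∧
      IsInclusion D ((HomotopyCategory.quotient _ _).map ι) ∧
        ∀ j, J.lo < j → IsIso (ι.f j) := by
  obtain ⟨m, hm⟩ : ∃ m, J.lo = m - 1 := ⟨J.lo + 1, by ring⟩
  rw [hm, sub_add_cancel]
  cases J <;> simp only [LamIdx.lo, LamIdx.hi] at hm hJ ⊢
  case X p q h =>
    subst hm
    refine ⟨.X m q (by omega), incXC D m q, rfl, rfl, .incX m q _ h,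
      fun j hj => isIso_strandMap_f ?_ ?_⟩ <;> split_ifs <;> first | rfl | omega
  case L p q h a ha haN =>
    subst hm
    refine ⟨.X m q (by omega), incXLC D m q a ha, rfl, rfl, .incXL m q _ h a ha haN,
      fun j hj => isIso_strandMap_f ?_ ?_⟩ <;> split_ifs <;> first | rfl | omega
  case R p q h b hb hbN =>
    subst hm
    refine ⟨.R m q (by omega) b hb hbN, incRC D m q b hbN, rfl, rfl, .incR m q _ h b hb hbN,
      fun j hj => isIso_strandMap_f ?_ ?_⟩ <;> split_ifs <;> first | rfl | omega
  case B p q h a b ha haN hb hbN =>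
    subst hm
    refine ⟨.R m q (by omega) b hb hbN, incRBC D m q (by omega) a b ha hbN, rfl, rfl,
      .incRB m q (by omega) _ h a b ha haN hb hbN, fun j hj => isIso_strandMap_f ?_ ?_⟩ <;>
      split_ifs <;> first | rfl | omega
  case Z p a b hb hba haN =>
    subst hm
    refine ⟨.L m m le_rfl b hb (hba.trans haN), incLZC D m a b hb, rfl, by simp,
      .incLZ m a b hb hba haN, fun j hj => isIso_strandMap_f ?_ ?_⟩ <;>
      split_ifs <;> first | rfl | omega

lemma LamIdx.exists_isProjection_comp_eq {I : LamIdx N} (hI : I.lo < I.hi)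
    {Y : CochainComplex (ModuleCat A) ℤ} (g : I.toCplx D ⟶ Y) (hg : g.f I.hi = 0) :
    ∃ (I' : LamIdx N) (π : I.toCplx D ⟶ I'.toCplx D) (g' : I'.toCplx D ⟶ Y),
      I'.lo = I.lo ∧ I'.hi = I.hi - 1 ∧
        IsProjection D ((HomotopyCategory.quotient _ _).map π) ∧ π ≫ g' = g := by
  obtain ⟨I', π, hlo, hhi, hπ, hiso⟩ := I.exists_isProjection_hi_sub_one D hI
  obtain ⟨g', hg'⟩ := HomologicalComplex.exists_desc_of_isIso_or_isZero π g fun j => by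
    rcases lt_or_ge j I.hi with hj | hj
    · exact .inl (hiso j hj)
    refine .inr ⟨I'.isZero_toCplx_X D (by omega), ?_⟩
    rcases hj.eq_or_lt with rfl | hj
    · exact hg
    · exact (I.isZero_toCplx_X D (.inr hj)).eq_of_src _ _
  exact ⟨I', π, g', hlo, hhi, hπ, hg'⟩

lemma LamIdx.exists_comp_isInclusion_eq {J : LamIdx N} (hJ : J.lo < J.hi)
    {W : CochainComplex (ModuleCat A) ℤ} (g : W ⟶ J.toCplx D) (hg : g.f J.lo = 0) :
    ∃ (J' : LamIdx N) (ι : J'.toCplx D ⟶ J.toCplx D) (g' : W ⟶ J'.toCplx D),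
      J'.lo = J.lo + 1 ∧ J'.hi = J.hi ∧
        IsInclusion D ((HomotopyCategory.quotient _ _).map ι) ∧ g' ≫ ι = g := by
  obtain ⟨J', ι, hlo, hhi, hι, hiso⟩ := J.exists_isInclusion_lo_add_one D hJ
  obtain ⟨g', hg'⟩ := HomologicalComplex.exists_lift_of_isIso_or_isZero ι g fun j => by
    rcases lt_or_ge J.lo j with hj | hj
    · exact .inl (hiso j hj)
    refine .inr ⟨J'.isZero_toCplx_X D (by omega), ?_⟩
    rcases hj.eq_or_lt with rfl | hj
    · exact hg
    · exact (J.isZero_toCplx_X D (.inl hj)).eq_of_tgt _ _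
  exact ⟨J', ι, g', hlo, hhi, hι, hg'⟩

lemma LamIdx.hom_eq_zero_of_lo_eq_hi {I J : LamIdx N} (hIJ : J.lo = I.hi)
    (g : I.toCplx D ⟶ J.toCplx D) (hg : g.f I.hi = 0) : g = 0 := by
  ext j : 1
  rcases lt_trichotomy j I.hi with hj | rfl | hj
  · exact (J.isZero_toCplx_X D (.inl (hIJ ▸ hj))).eq_of_tgt _ _
  · exact hg
  · exact (I.isZero_toCplx_X D (.inr hj)).eq_of_src _ _

lemma exists_rep_eq_zero_of_not_isCrossingMor {I J : LamIdx N} {f : Kob D I ⟶ Kob D J}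
    (hf : f ≠ 0) (hcr : ¬ IsCrossingMor D f) :
    ∃ g : I.toCplx D ⟶ J.toCplx D,
      (HomotopyCategory.quotient _ _).map g = f ∧ (g.f I.hi = 0 ∨ g.f J.lo = 0) := by
  simp only [IsCrossingMor, hf, ne_eq, not_false_eq_true, true_and, not_forall] at hcr
  obtain ⟨g, hgf, hg⟩ := hcr
  exact ⟨g, hgf, by tauto⟩

theorem exists_isProjection_isCrossingMor_isInclusion (I J : LamIdx N) (hIJ : CrossingPair I J)
    (f : Kob D I ⟶ Kob D J) (hf : f ≠ 0) :
    ∃ (I' J' : LamIdx N) (pr : Kob D I ⟶ Kob D I') (inc : Kob D J' ⟶ Kob D J)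
      (f' : Kob D I' ⟶ Kob D J'),
      IsProjection D pr ∧ IsInclusion D inc ∧ IsCrossingMor D f' ∧ f = pr ≫ f' ≫ inc := by
  by_cases hcr : IsCrossingMor D f
  · exact ⟨I, J, 𝟙 _, 𝟙 _, f, .id I, .id J, hcr, by simp⟩
  obtain ⟨g, rfl, hg⟩ := exists_rep_eq_zero_of_not_isCrossingMor D hf hcr
  obtain ⟨hlo, hmid, hhi⟩ := hIJ
  obtain hmid | hmid := hmid.eq_or_lt
  · have hg : g.f I.hi = 0 := by rcases hg with hg | hg; exacts [hg, hmid ▸ hg]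
    exact (hf (by rw [LamIdx.hom_eq_zero_of_lo_eq_hi D hmid g hg, Functor.map_zero]; rfl)).elim
  -- `erw` below: `Kob D I` is only definitionally `(quotient _ _).obj (I.toCplx D)`.
  rcases hg with hg | hg
  · obtain ⟨I', π, g', hlo', hhi', hπ, rfl⟩ :=
      I.exists_isProjection_comp_eq D (by omega) g hg
    obtain ⟨I'', J', pr, inc, f', hpr, hinc, hf', heq⟩ :=
      exists_isProjection_isCrossingMor_isInclusion I' J ⟨by omega, by omega, by omega⟩
        ((HomotopyCategory.quotient _ _).map g')
        fun h => hf (by erw [Functor.map_comp, h, comp_zero]; rfl)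
    exact ⟨I'', J', _ ≫ pr, inc, f', .comp _ _ hπ hpr, hinc, hf', by
      erw [Functor.map_comp, heq]; exact (Category.assoc _ _ _).symm⟩
  · obtain ⟨J', ι, g', hlo', hhi', hι, rfl⟩ :=
      J.exists_comp_isInclusion_eq D (by omega) g hg
    obtain ⟨I', J'', pr, inc, f', hpr, hinc, hf', heq⟩ :=
      exists_isProjection_isCrossingMor_isInclusion I J' ⟨by omega, by omega, by omega⟩
        ((HomotopyCategory.quotient _ _).map g')
        fun h => hf (by erw [Functor.map_comp, h, zero_comp]; rfl)
    exact ⟨I', J'', pr, inc ≫ _, f', hpr, .comp _ _ hinc hι, hf', by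
      erw [Functor.map_comp, heq]
      exact (Category.assoc _ _ _).trans (congrArg (pr ≫ ·) (Category.assoc _ _ _))⟩
termination_by ((I.hi - I.lo) + (J.hi - J.lo)).toNat
decreasing_by all_goals omega

end Lam

end PaperCZ

open PaperCZ in
theorem stmt_17_general {N : ℕ} [NeZero N]
    {A : Type*} [Ring A]
    (D : CyclicNakayamaData N 1 A) :
    ∀ I J : LamIdx N, CrossingPair I J → ∀ f : Kob D I ⟶ Kob D J, f ≠ 0 →
      ∃ (I' J' : LamIdx N) (pr : Kob D I ⟶ Kob D I') (inc : Kob D J' ⟶ Kob D J)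
        (f' : Kob D I' ⟶ Kob D J'),
        IsProjection D pr ∧ IsInclusion D inc ∧ IsCrossingMor D f' ∧
        f = pr ≫ f' ≫ inc :=
  exists_isProjection_isCrossingMor_isInclusion D

open PaperCZ in
/--
Let N ≥ 2 and A = A(1, N). Assume X, Y belong to Λ with crossing
supports, and let f: X → Y be a nonzero morphism in K^b(A-proj). Then there exist
X′, Y′ in Λ, an inclusion inc: Y′ → Y, a projection pr: X → X′ and a crossing morphism
f′: X′ → Y′ with f = inc ∘ f′ ∘ pr in K^b(A-proj).
-/
theorem stmt_17 {k : Type*} [Field k] {N : ℕ} [NeZero N] (hN : 2 ≤ N)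
    {A : Type*} [Ring A] [Algebra k A]
    (D : CyclicNakayamaData N 1 A) (hA : IsCyclicNakayama k D) :
    ∀ I J : LamIdx N, CrossingPair I J → ∀ f : Kob D I ⟶ Kob D J, f ≠ 0 →
      ∃ (I' J' : LamIdx N) (pr : Kob D I ⟶ Kob D I') (inc : Kob D J' ⟶ Kob D J)
        (f' : Kob D I' ⟶ Kob D J'),
        IsProjection D pr ∧ IsInclusion D inc ∧ IsCrossingMor D f' ∧
        f = pr ≫ f' ≫ inc :=
  stmt_17_general D
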